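/- A phaser may happen in parallel with its immediate successor: if the phaser P is well-formed and well-ordered and P reduces to Q by some task performing some operation, then P ∥ Q. -/
import Mathlib


/-- Registration modes: signal-wait, signal-only, wait-only. -/
inductive Mode
  | SW | SO | WO
deriving DecidableEq

/-- A mode can signal iff it is SW or SO. -/
def Mode.CanSignal (r : Mode) : Prop := r = Mode.SW ∨ r = Mode.SO

/-- A mode can wait iff it is SW or WO. -/
def Mode.CanWait (r : Mode) : Prop := r = Mode.SW ∨ r = Mode.WO

/-- A view: a signal phase, a wait phase, and a registration mode. -/
structure View where
  sp : ℕ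
  wp : ℕ
  mode : Mode

def View.CanSignal (v : View) : Prop := v.mode.CanSignal

def View.CanWait (v : View) : Prop := v.mode.CanWait

/-- Well-formed views. -/
def View.WellFormed (v : View) : Prop :=
  (v.CanWait ∧ v.wp = v.sp) ∨ (v.CanWait ∧ v.wp + 1 = v.sp) ∨
  (v.mode = Mode.SO ∧ v.wp ≤ v.sp)

/-- Happens-before on views: v1 ≺ v2. -/
def View.HB (v1 v2 : View) : Prop :=
  v1.sp < v2.wp ∧ v1.CanSignal ∧ v2.CanWait

/-- Cannot-happen-before on views: v1 ⊵ v2. -/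
def View.CHB (v1 v2 : View) : Prop :=
  v1.mode = Mode.WO ∨ v1.sp ≥ v2.wp ∨ v2.mode = Mode.SO

/-- A phaser: a finite partial map from task identifiers (ℕ) to views. -/
abbrev Phaser := Finmap (fun _ : ℕ => View)

/-- Happens-before on phasers: P ≺ Q. -/
def Phaser.HB (P Q : Phaser) : Prop :=
  ∃ t t' v1 v2, P.lookup t = some v1 ∧ Q.lookup t' = some v2 ∧ View.HB v1 v2

/-- Cannot-happen-before on phasers: P ⊵ Q. -/
def Phaser.CHB (P Q : Phaser) : Prop :=
  ∀ t t' v1 v2, P.lookup t = some v1 → Q.lookup t' = some v2 → View.CHB v1 v2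

/-- May-happen-in-parallel on phasers: P ∥ Q. -/
def Phaser.Par (P Q : Phaser) : Prop := Phaser.CHB P Q ∧ Phaser.CHB Q P

/-- A well-formed phaser: every view in its range is well-formed. -/
def Phaser.WellFormed (P : Phaser) : Prop :=
  ∀ t v, P.lookup t = some v → v.WellFormed

/-- A well-ordered phaser: P ⊵ P. -/
def Phaser.WellOrdered (P : Phaser) : Prop := Phaser.CHB P P

/-- Phaser operations. -/
inductive Op
  | signal
  | wait
  | register (t' : ℕ) (r : Mode)
  | drop

/-- The reduction relation on phasers: P —(t,o)→ Q. -/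
inductive Reduces : Phaser → ℕ → Op → Phaser → Prop
  | signal {P : Phaser} {t : ℕ} {v : View} :
      P.lookup t = some v →
      v.CanSignal →
      (v.mode = Mode.SW → v.wp = v.sp) →
      Reduces P t Op.signal (P.insert t { v with sp := v.sp + 1 })
  | wait {P : Phaser} {t : ℕ} {v : View} :
      P.lookup t = some v →
      v.CanWait →
      (v.mode = Mode.SW → v.wp + 1 = v.sp) →
      (v.mode = Mode.SO ∨
        ∀ t' v', P.lookup t' = some v' → v'.CanSignal → v'.sp ≥ v.wp + 1) →
      Reduces P t Op.wait (P.insert t { v with wp := v.wp + 1 })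
  | register {P : Phaser} {t t' : ℕ} {r : Mode} {v : View} :
      t' ∉ P →
      P.lookup t = some v →
      (r.CanWait → v.CanWait) →
      (r.CanSignal → v.CanSignal) →
      Reduces P t (Op.register t' r) (P.insert t' { v with mode := r })
  | drop {P : Phaser} {t : ℕ} :
      t ∈ P →
      Reduces P t Op.drop (P.erase t)

/-- Single-step reduction: P ⟶ Q iff some task performs some operation. -/
def SReduces (P Q : Phaser) : Prop := ∃ t o, Reduces P t o Q

lemma not_canSignal_eq_WO {m : Mode} (h : ¬ m.CanSignal) : m = Mode.WO := by
  cases m <;> simp [Mode.CanSignal] at * <;> tauto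

lemma not_canWait_eq_SO {m : Mode} (h : ¬ m.CanWait) : m = Mode.SO := by
  cases m <;> simp [Mode.CanWait] at * <;> tauto

lemma lookup_insert_cases {P : Phaser} {t t' : ℕ} {w w' : View}
    (h : (P.insert t w).lookup t' = some w') :
    (t' = t ∧ w' = w) ∨ (t' ≠ t ∧ P.lookup t' = some w') := by
  by_cases ht : t' = t
  · subst ht; rw [Finmap.lookup_insert] at h; exact Or.inl ⟨rfl, (Option.some_inj.mp h).symm⟩
  · exact Or.inr ⟨ht, by rwa [Finmap.lookup_insert_of_ne _ ht] at h⟩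

/-- a phaser may happen in parallel with its immediate successor. -/
theorem reduces_par (P Q : Phaser)
    (hwf : P.WellFormed) (hwo : P.WellOrdered)
    (hr : ∃ t o, Reduces P t o Q) :
    Phaser.Par P Q := by
  obtain ⟨t, o, hred⟩ := hr
  cases hred with
  | signal hl hcs hsw =>
    rename_i v
    constructor
    · intro a b v1 v2 h1 h2
      rcases lookup_insert_cases h2 with ⟨_, rfl⟩ | ⟨_, h2'⟩
      · exact hwo a t v1 v h1 hl
      · exact hwo a b v1 v2 h1 h2'
    · intro a b v1 v2 h1 h2
      rcases lookup_insert_cases h1 with ⟨_, rfl⟩ | ⟨_, h1'⟩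
      · rcases hwo t b v v2 hl h2 with h | h | h
        · exact Or.inl h
        · exact Or.inr (Or.inl (le_trans h (Nat.le_succ _)))
        · exact Or.inr (Or.inr h)
      · exact hwo a b v1 v2 h1' h2
  | wait hl hcw hsw hsync =>
    rename_i v
    constructor
    · intro a b v1 v2 h1 h2
      rcases lookup_insert_cases h2 with ⟨_, rfl⟩ | ⟨_, h2'⟩
      · rcases hsync with hso | hall
        · exact Or.inr (Or.inr hso)
        · by_cases hcs : v1.CanSignal
          · exact Or.inr (Or.inl (hall a v1 h1 hcs))
          · exact Or.inl (not_canSignal_eq_WO hcs)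
      · exact hwo a b v1 v2 h1 h2'
    · intro a b v1 v2 h1 h2
      rcases lookup_insert_cases h1 with ⟨_, rfl⟩ | ⟨_, h1'⟩
      · exact hwo t b v v2 hl h2
      · exact hwo a b v1 v2 h1' h2
  | register hmem hl hw hs =>
    rename_i t2 r v
    constructor
    · intro a b v1 v2 h1 h2
      rcases lookup_insert_cases h2 with ⟨_, rfl⟩ | ⟨_, h2'⟩
      · rcases hwo a t v1 v h1 hl with h | h | h
        · exact Or.inl h
        · exact Or.inr (Or.inl h)
        · refine Or.inr (Or.inr (not_canWait_eq_SO ?_))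
          intro hrw
          have := hw hrw
          simp [View.CanWait, Mode.CanWait, h] at this
      · exact hwo a b v1 v2 h1 h2'
    · intro a b v1 v2 h1 h2
      rcases lookup_insert_cases h1 with ⟨_, rfl⟩ | ⟨_, h1'⟩
      · rcases hwo t b v v2 hl h2 with h | h | h
        · refine Or.inl (not_canSignal_eq_WO ?_)
          intro hrs
          have := hs hrs
          simp [View.CanSignal, Mode.CanSignal, h] at this
        · exact Or.inr (Or.inl h)
        · exact Or.inr (Or.inr h)
      · exact hwo a b v1 v2 h1' h2
  | drop hmem =>
    constructor
    · intro a b v1 v2 h1 h2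
      by_cases hb : b = t
      · subst hb; rw [Finmap.lookup_erase] at h2; exact absurd h2 (by simp)
      · rw [Finmap.lookup_erase_ne hb] at h2
        exact hwo a b v1 v2 h1 h2
    · intro a b v1 v2 h1 h2
      by_cases ha : a = t
      · subst ha; rw [Finmap.lookup_erase] at h1; exact absurd h1 (by simp)
      · rw [Finmap.lookup_erase_ne ha] at h1
        exact hwo a b v1 v2 h1 h2
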